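/- Let m be a positive integer and let Γ be a finitely generated subgroup of the general linear group GL(m, ℂ). Then Γ is residually finite: for every γ ∈ Γ with γ ≠ 1, there exists a normal subgroup N of Γ of finite index such that γ ∉ N. -/

import Mathlib

/-!
The entries of the generators of `Γ` and of their inverses generate a finitely generated
subring `R ⊆ ℂ`, and `Γ` embeds in `GL(m, R)`. A finitely generated ℤ-algebra is a Jacobson ring,
so in the reduced ring `R` every nonzero element `x` lies outside some maximal ideal `𝔪`, and by
Zariski's lemma the residue field `R ⧸ 𝔪` is finite. Taking `x` to be a nonzero entry of `γ - 1`,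
reduction modulo `𝔪` maps `GL(m, R)` to the finite group `GL(m, R ⧸ 𝔪)` without killing `γ`.
-/

instance Int.isJacobsonRing : IsJacobsonRing ℤ := by
  rw [isJacobsonRing_iff_prime_eq]
  intro P hP
  rcases eq_or_ne P ⊥ with rfl | hP0
  · refine le_antisymm (fun x hx => ?_) Ideal.le_jacobson
    have hunit := Int.isUnit_iff.mp (Ideal.mem_jacobson_bot.mp hx x)
    have : x = 0 := by rcases hunit with h | h <;> nlinarith
    simp [this]
  · have := IsPrime.to_maximal_ideal hP0
    exact Ideal.jacobson_eq_self_of_isMaximal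

theorem finite_of_finiteType_int (K : Type*) [Field K] [Algebra.FiniteType ℤ K] : Finite K := by
  have : Module.Finite ℤ K := finite_of_finite_type_of_isJacobsonRing ℤ K
  obtain ⟨p, hp⟩ := CharP.exists K
  rcases eq_or_ne p 0 with rfl | hp0
  · -- `K` would be an integral extension of `ℤ`, forcing `ℤ` to be a field
    have : CharZero K := CharP.charP_to_charZero K
    exact absurd (isField_of_isIntegral_of_isField (R := ℤ) (S := K) Int.cast_injective
      (Field.toIsField K)) Int.not_isField
  · have : NeZero p := ⟨hp0⟩
    let := ZMod.algebra K p
    have : Module.Finite (ZMod p) K := Module.Finite.of_restrictScalars_finite ℤ (ZMod p) K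
    exact Module.finite_of_finite (ZMod p)

theorem Ideal.exists_isMaximal_notMem_of_ne_zero {R : Type*} [CommRing R] [IsJacobsonRing R]
    [IsReduced R] {x : R} (hx : x ≠ 0) : ∃ 𝔪 : Ideal R, 𝔪.IsMaximal ∧ x ∉ 𝔪 := by
  have hjac : (⊥ : Ideal R).jacobson = ⊥ := IsJacobsonRing.out ‹_› Ideal.isRadical_bot
  have : x ∉ (⊥ : Ideal R).jacobson := by simpa [hjac] using hx
  simp only [Ideal.jacobson, Ideal.mem_sInf, not_forall] at this
  obtain ⟨𝔪, ⟨-, h𝔪⟩, hx𝔪⟩ := this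
  exact ⟨𝔪, h𝔪, hx𝔪⟩

instance Ideal.finite_quotient_of_finiteType_int {R : Type*} [CommRing R] [Algebra.FiniteType ℤ R]
    (𝔪 : Ideal R) [𝔪.IsMaximal] : Finite (R ⧸ 𝔪) := by
  let := Ideal.Quotient.field 𝔪
  -- the lemma needs the ℤ-algebra structure induced by the field structure, not the quotient one
  exact @finite_of_finiteType_int _ _
    (.of_surjective (Ideal.Quotient.mk 𝔪).toIntAlgHom Ideal.Quotient.mk_surjective)

theorem Group.ResiduallyFinite.of_injective {G H : Type*} [Group G] [Group H]
    [Group.ResiduallyFinite H] (f : G →* H) (hf : Function.Injective f) :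
    Group.ResiduallyFinite G := by
  refine Group.residuallyFinite_iff_exists_finiteIndexNormalSubgroup.mpr fun g hg => ?_
  obtain ⟨K, hK⟩ :=
    Group.exists_finiteIndexNormalSubgroup_notMem (f g) ((map_ne_one_iff f hf).mpr hg)
  exact ⟨K.comap f, hK⟩

theorem Units.mem_range_map_of_injective {M N : Type*} [Monoid M] [Monoid N] {f : M →* N}
    (hf : Function.Injective f) {u : Nˣ} (hu : (u : N) ∈ Set.range f)
    (hu' : ((u⁻¹ : Nˣ) : N) ∈ Set.range f) : u ∈ (Units.map f).range := by
  obtain ⟨a, ha⟩ := hu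
  obtain ⟨b, hb⟩ := hu'
  have hab : a * b = 1 := hf (by simp [ha, hb])
  have hba : b * a = 1 := hf (by simp [ha, hb])
  exact ⟨⟨a, b, hab, hba⟩, Units.ext ha⟩

namespace Matrix.GeneralLinearGroup

variable {n : Type*} [Fintype n] [DecidableEq n]

instance residuallyFinite {R : Type*} [CommRing R] [IsReduced R] [Algebra.FiniteType ℤ R] :
    Group.ResiduallyFinite (GL n R) := by
  have := isJacobsonRing_of_finiteType (A := ℤ) (B := R)
  refine Group.residuallyFinite_of_forall_exists_finite_monoidHom fun g hg => ?_
  obtain ⟨i, j, hij⟩ : ∃ i j, g i j ≠ (1 : GL n R) i j := by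
    by_contra! h
    exact hg (Matrix.GeneralLinearGroup.ext h)
  obtain ⟨𝔪, h𝔪, hx⟩ := Ideal.exists_isMaximal_notMem_of_ne_zero (sub_ne_zero.mpr hij)
  refine ⟨GL n (R ⧸ 𝔪), inferInstance, inferInstance, map (Ideal.Quotient.mk 𝔪), fun h => hx ?_⟩
  rw [← Ideal.Quotient.eq]
  simpa [Matrix.one_apply, apply_ite] using congr_arg (fun u : GL n (R ⧸ 𝔪) => u i j) h

theorem mem_range_map_subtype {S : Type*} [CommRing S] {R : Subring S} {g : GL n S}
    (hg : ∀ i j, g i j ∈ R) (hg' : ∀ i j, g⁻¹ i j ∈ R) : g ∈ (map R.subtype).range := by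
  have hrange : ∀ A : Matrix n n S, (∀ i j, A i j ∈ R) →
      A ∈ Set.range (R.subtype.mapMatrix.toMonoidHom : Matrix n n R →* Matrix n n S) :=
    fun A hA => ⟨Matrix.of fun i j => ⟨A i j, hA i j⟩, rfl⟩
  exact Units.mem_range_map_of_injective (Matrix.map_injective R.subtype_injective)
    (hrange _ hg) (hrange _ hg')

theorem exists_subring_finiteType_le_range_map {S : Type*} [CommRing S] {Γ : Subgroup (GL n S)}
    (hΓ : Γ.FG) : ∃ R : Subring S, Algebra.FiniteType ℤ R ∧ Γ ≤ (map R.subtype).range := by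
  obtain ⟨s, rfl⟩ := hΓ
  let E : Set S := ⋃ g ∈ s, (Set.range fun p : n × n => g p.1 p.2) ∪
    Set.range fun p : n × n => g⁻¹ p.1 p.2
  have hE : E.Finite :=
    s.finite_toSet.biUnion fun _ _ => (Set.finite_range _).union (Set.finite_range _)
  refine ⟨(Algebra.adjoin ℤ E).toSubring, ?_, (Subgroup.closure_le _).mpr fun g hg => ?_⟩
  · exact (Subalgebra.fg_iff_finiteType _).mp ⟨hE.toFinset, by simp⟩
  · exact mem_range_map_subtype
      (fun i j => Algebra.subset_adjoin (Set.mem_biUnion hg (Or.inl ⟨(i, j), rfl⟩)))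
      (fun i j => Algebra.subset_adjoin (Set.mem_biUnion hg (Or.inr ⟨(i, j), rfl⟩)))

theorem residuallyFinite_of_fg {S : Type*} [CommRing S] [IsReduced S] (Γ : Subgroup (GL n S))
    (hΓ : Γ.FG) : Group.ResiduallyFinite Γ := by
  obtain ⟨R, hR, hΓR⟩ := exists_subring_finiteType_le_range_map hΓ
  have := isReduced_of_injective R.subtype R.subtype_injective
  have hinj : Function.Injective (map (n := n) R.subtype) :=
    Units.map_injective (Matrix.map_injective R.subtype_injective)
  exact .of_injective ((MonoidHom.ofInjective hinj).symm.toMonoidHom.comp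
    (Subgroup.inclusion hΓR)) ((MonoidHom.ofInjective hinj).symm.injective.comp
    (Subgroup.inclusion_injective hΓR))

end Matrix.GeneralLinearGroup

theorem finitely_generated_linear_group_complex_residually_finite_general
    (m : ℕ)
    (Γ : Subgroup (Matrix.GeneralLinearGroup (Fin m) ℂ))
    (hΓ : Group.FG Γ) :
    ∀ γ : Γ, γ ≠ 1 →
      ∃ N : Subgroup Γ, N.Normal ∧ N.FiniteIndex ∧ γ ∉ N := by
  have := Matrix.GeneralLinearGroup.residuallyFinite_of_fg Γ ((Group.fg_iff_subgroup_fg Γ).mp hΓ)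
  intro γ hγ
  obtain ⟨N, hγN⟩ := Group.exists_finiteIndexNormalSubgroup_notMem γ hγ
  exact ⟨N, inferInstance, inferInstance, hγN⟩

/-- Selberg–Mal'cev lemma over ℂ: every finitely generated subgroup of
`GL(m, ℂ)` is residually finite: every nontrivial element is excluded by some
finite-index normal subgroup. -/
theorem finitely_generated_linear_group_complex_residually_finite
    (m : ℕ) (hm : 0 < m)
    (Γ : Subgroup (Matrix.GeneralLinearGroup (Fin m) ℂ))
    (hΓ : Group.FG Γ) :
    ∀ γ : Γ, γ ≠ 1 →
      ∃ N : Subgroup Γ, N.Normal ∧ N.FiniteIndex ∧ γ ∉ N :=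
  finitely_generated_linear_group_complex_residually_finite_general m Γ hΓ
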